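/- For nonempty compact sets A, B ⊆ ℝ^d, the Hausdorff distance satisfies haus(A,B) = max{|a−b| : (a,b) ∈ Π(A,B)}, i.e., the Hausdorff distance equals the maximal distance over metric pairs. -/

import Mathlib

open Filter Metric Topology Set TopologicalSpace

noncomputable section

/-- The set of projections of `x` on `B`: points of `B` nearest to `x`. -/
def metricProj {E : Type*} [MetricSpace E] (x : E) (B : Set E) : Set E :=
  {b ∈ B | dist x b = Metric.infDist x B}

/-- The set of metric pairs of `A` and `B`. -/
def MetricPairs {E : Type*} [MetricSpace E] (A B : Set E) : Set (E × E) :=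
  {p | p.1 ∈ A ∧ p.2 ∈ B ∧ (p.1 ∈ metricProj p.2 A ∨ p.2 ∈ metricProj p.1 B)}

/-- A partition `a = x_0 < x_1 < ... < x_n = b` of `[a,b]`. -/
structure PartitionIcc (a b : ℝ) where
  n : ℕ
  pts : Fin (n + 1) → ℝ
  mono : StrictMono pts
  first : pts 0 = a
  last : pts (Fin.last n) = b

/-- The norm `|χ| = max_i (x_{i+1} - x_i)` of a partition. -/
noncomputable def PartitionIcc.meshNorm {a b : ℝ} (χ : PartitionIcc a b) : ℝ :=
  ⨆ i : Fin χ.n, (χ.pts i.succ - χ.pts i.castSucc)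

/-- `c` is a chain function of the set-valued function `F` based on the partition `χ`:
it is piecewise constant, with values at consecutive partition points forming metric pairs
of the corresponding values of `F`. -/
def IsChainFun {E : Type*} [MetricSpace E] {a b : ℝ}
    (F : ℝ → Set E) (χ : PartitionIcc a b) (c : ℝ → E) : Prop :=
  ∃ y : Fin (χ.n + 1) → E,
    (∀ i : Fin χ.n,
      (y i.castSucc, y i.succ) ∈ MetricPairs (F (χ.pts i.castSucc)) (F (χ.pts i.succ))) ∧
    (∀ i : Fin χ.n, ∀ t ∈ Set.Ico (χ.pts i.castSucc) (χ.pts i.succ), c t = y i.castSucc) ∧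
    c b = y (Fin.last χ.n)

/-- `s` is a metric selection of `F` on `[a,b]`: a selection of `F` which is the pointwise
limit of a sequence of chain functions of `F` whose partition norms tend to `0`. -/
def IsMetricSelection {E : Type*} [MetricSpace E] (F : ℝ → Set E) (a b : ℝ) (s : ℝ → E) : Prop :=
  (∀ x ∈ Set.Icc a b, s x ∈ F x) ∧
  ∃ χ : ℕ → PartitionIcc a b, ∃ c : ℕ → ℝ → E,
    (∀ k, IsChainFun F (χ k) (c k)) ∧
    Filter.Tendsto (fun k => (χ k).meshNorm) Filter.atTop (nhds 0) ∧
    ∀ x ∈ Set.Icc a b, Filter.Tendsto (fun k => c k x) Filter.atTop (nhds (s x))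

/-- Property 2 of `F` at `ξ`, with `Fm = F(ξ-)`, `Fp = F(ξ+)`: every metric pair of the
one-sided limits is a limit of metric pairs `(y_n^-, y_n^+) ∈ Π(F(ξ_n^-), F(ξ_n^+))`
with `ξ_n^- < ξ < ξ_n^+`, `ξ_n^± → ξ`. -/
def Property2 {E : Type*} [MetricSpace E] (F : ℝ → Set E) (a b ξ : ℝ)
    (Fm Fp : Set E) : Prop :=
  ∀ ym yp : E, (ym, yp) ∈ MetricPairs Fm Fp →
    ∃ ξm ξp : ℕ → ℝ, ∃ ym' yp' : ℕ → E,
      (∀ n, ξm n ∈ Set.Ico a ξ) ∧ (∀ n, ξp n ∈ Set.Ioc ξ b) ∧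
      Filter.Tendsto ξm Filter.atTop (nhds ξ) ∧ Filter.Tendsto ξp Filter.atTop (nhds ξ) ∧
      (∀ n, (ym' n, yp' n) ∈ MetricPairs (F (ξm n)) (F (ξp n))) ∧
      Filter.Tendsto ym' Filter.atTop (nhds ym) ∧ Filter.Tendsto yp' Filter.atTop (nhds yp)

/-- The metric average `(1/2) A ⊕ (1/2) B = {(a+b)/2 : (a,b) ∈ Π(A,B)}`. -/
def metricAvg {E : Type*} [NormedAddCommGroup E] [NormedSpace ℝ E] (A B : Set E) : Set E :=
  {v | ∃ p ∈ MetricPairs A B, v = (2⁻¹ : ℝ) • (p.1 + p.2)}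

/-- The limit set `A_F(x) = {(s(x-) + s(x+))/2 : s a metric selection of F}`. -/
def limitSet {E : Type*} [NormedAddCommGroup E] [NormedSpace ℝ E]
    (F : ℝ → Set E) (a b x : ℝ) : Set E :=
  {v | ∃ s : ℝ → E, ∃ sm sp : E, IsMetricSelection F a b s ∧
      Filter.Tendsto s (nhdsWithin x (Set.Ico a x)) (nhds sm) ∧
      Filter.Tendsto s (nhdsWithin x (Set.Ioc x b)) (nhds sp) ∧
      v = (2⁻¹ : ℝ) • (sm + sp)}

/-- The left local quasi-modulus `ω̃⁻(f, xs, δ)` of `f` at `xs`, where `fl = f(xs-)`. -/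
noncomputable def qmodLeft {X : Type*} [PseudoMetricSpace X]
    (f : ℝ → X) (fl : X) (a b xs δ : ℝ) : ℝ :=
  sSup {r | ∃ x ∈ Set.Ico (xs - δ) xs ∩ Set.Icc a b, r = dist fl (f x)}

/-- The right local quasi-modulus `ω̃⁺(f, xs, δ)` of `f` at `xs`, where `fr = f(xs+)`. -/
noncomputable def qmodRight {X : Type*} [PseudoMetricSpace X]
    (f : ℝ → X) (fr : X) (a b xs δ : ℝ) : ℝ :=
  sSup {r | ∃ x ∈ Set.Ioc xs (xs + δ) ∩ Set.Icc a b, r = dist fr (f x)}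

/-- The graph of a set-valued function on `[a,b]` is compact. -/
def HasCompactGraph {E : Type*} [MetricSpace E] (F : ℝ → Set E) (a b : ℝ) : Prop :=
  IsCompact {p : ℝ × E | p.1 ∈ Set.Icc a b ∧ p.2 ∈ F p.1}

/-- The (real-valued) variation function `v_f(x) = V_a^x(f)`. -/
noncomputable def varFun {X : Type*} [PseudoEMetricSpace X] (f : ℝ → X) (a x : ℝ) : ℝ :=
  (eVariationOn f (Set.Icc a x)).toReal

/-- Upper Kuratowski limit of a sequence of sets in a topological space. -/
def kuratowskiLimsup {X : Type*} [TopologicalSpace X] (C : ℕ → Set X) : Set X :=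
  {x | ∃ φ : ℕ → ℕ, StrictMono φ ∧ ∃ c : ℕ → X,
    (∀ k, c k ∈ C (φ k)) ∧ Filter.Tendsto c Filter.atTop (nhds x)}

/-!
Every metric pair `(a, b)` realises either `infDist a B` or `infDist b A`, and both are at most
the Hausdorff distance. Conversely, by compactness the Hausdorff distance is attained as
`infDist a B` at some `a ∈ A` or as `infDist b A` at some `b ∈ B`, and pairing that point with
one of its projections gives a metric pair at exactly that distance.
-/

section

variable {E : Type*} [MetricSpace E] {A B : Set E}

theorem IsCompact.exists_infDist_eq_hausdorffDist (hA : IsCompact A) (hAne : A.Nonempty)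
    (hB : IsCompact B) (hBne : B.Nonempty) :
    (∃ a ∈ A, infDist a B = hausdorffDist A B) ∨ ∃ b ∈ B, infDist b A = hausdorffDist A B := by
  have hfin : hausdorffEDist A B ≠ ⊤ :=
    hausdorffEDist_ne_top_of_nonempty_of_bounded hAne hBne hA.isBounded hB.isBounded
  obtain ⟨a, ha, ha_max⟩ := hA.exists_isMaxOn hAne (continuous_infDist_pt B).continuousOn
  obtain ⟨b, hb, hb_max⟩ := hB.exists_isMaxOn hBne (continuous_infDist_pt A).continuousOn
  have hle : hausdorffDist A B ≤ max (infDist a B) (infDist b A) :=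
    hausdorffDist_le_of_infDist (infDist_nonneg.trans (le_max_left _ _))
      (fun x hx => (ha_max hx).trans (le_max_left _ _))
      (fun x hx => (hb_max hx).trans (le_max_right _ _))
  rcases le_total (infDist b A) (infDist a B) with hba | hab
  · refine Or.inl ⟨a, ha, le_antisymm (infDist_le_hausdorffDist_of_mem ha hfin) ?_⟩
    rwa [max_eq_left hba] at hle
  · refine Or.inr ⟨b, hb, le_antisymm ?_ ?_⟩
    · rw [hausdorffDist_comm]
      exact infDist_le_hausdorffDist_of_mem hb (by rwa [hausdorffEDist_comm])
    · rwa [max_eq_right hab] at hle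

namespace MetricPairs

theorem swap_mem_iff {p : E × E} : p.swap ∈ MetricPairs B A ↔ p ∈ MetricPairs A B := by
  simp only [MetricPairs, Set.mem_ofPred_eq, Prod.fst_swap, Prod.snd_swap]
  tauto

theorem dist_le_hausdorffDist (hfin : hausdorffEDist A B ≠ ⊤) {p : E × E}
    (hp : p ∈ MetricPairs A B) : dist p.1 p.2 ≤ hausdorffDist A B := by
  obtain ⟨hA, hB, ⟨-, hproj⟩ | ⟨-, hproj⟩⟩ := hp
  · rw [dist_comm, hproj, hausdorffDist_comm]
    exact infDist_le_hausdorffDist_of_mem hB (by rwa [hausdorffEDist_comm])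
  · rw [hproj]
    exact infDist_le_hausdorffDist_of_mem hA hfin

theorem exists_mem_dist_eq_infDist {a : E} (ha : a ∈ A) (hB : IsCompact B) (hBne : B.Nonempty) :
    ∃ b, (a, b) ∈ MetricPairs A B ∧ dist a b = infDist a B := by
  obtain ⟨b, hb, hab⟩ := hB.exists_infDist_eq_dist hBne a
  exact ⟨b, ⟨ha, hb, Or.inr ⟨hb, hab.symm⟩⟩, hab.symm⟩

theorem exists_dist_eq_hausdorffDist (hA : IsCompact A) (hAne : A.Nonempty)
    (hB : IsCompact B) (hBne : B.Nonempty) :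
    ∃ p ∈ MetricPairs A B, dist p.1 p.2 = hausdorffDist A B := by
  rcases hA.exists_infDist_eq_hausdorffDist hAne hB hBne with ⟨a, ha, h⟩ | ⟨b, hb, h⟩
  · obtain ⟨b, hp, hab⟩ := exists_mem_dist_eq_infDist ha hB hBne
    exact ⟨(a, b), hp, hab.trans h⟩
  · obtain ⟨a, hp, hba⟩ := exists_mem_dist_eq_infDist hb hA hAne
    exact ⟨(a, b), swap_mem_iff.mp hp, by rw [dist_comm, hba, h]⟩

end MetricPairs

end

open MetricPairs

/-- the Hausdorff distance equals the maximal distance over metric pairs. -/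
theorem stmt_3 {d : ℕ} (A B : Set (EuclideanSpace ℝ (Fin d)))
    (hA : IsCompact A) (hAne : A.Nonempty) (hB : IsCompact B) (hBne : B.Nonempty) :
    (∃ p ∈ MetricPairs A B, dist p.1 p.2 = Metric.hausdorffDist A B) ∧
      (∀ q ∈ MetricPairs A B, dist q.1 q.2 ≤ Metric.hausdorffDist A B) :=
  ⟨exists_dist_eq_hausdorffDist hA hAne hB hBne,
    fun _ hq => dist_le_hausdorffDist
      (hausdorffEDist_ne_top_of_nonempty_of_bounded hAne hBne hA.isBounded hB.isBounded) hq⟩
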